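/- For positive integer n, real p with 0 < p ≤ 1 and μ = np an integer, μ·(1 - (e/(2π))·√(1-p)/√μ) ≤ E[min(Bin(n,p), μ)] ≤ μ·(1 - (√(2π)/e²)·√(1-p)/√μ). -/

import Mathlib

/-!
With `b i = C(n, i) p^i (1-p)^(n-i)` one has `(np - i) b i = A (i+1) - A i` for
`A i = i (1-p) b i`, so the deficit `E[(μ - X)⁺]` telescopes to `μ (1-p) b μ` and
`E[min(X, μ)] = μ - μ (1-p) b μ`. For `p = μ / n` the mode weight is
`b μ = s n / (s μ * s (n-μ)) * √(n / (2μ(n-μ)))` in terms of the Stirling sequence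
`s m = m! / (√(2m) (m/e)^m)`, which decreases from `e/√2` to `√π`; this gives both constants.
-/

open Real Finset Polynomial Stirling

theorem stirlingSeq_le_exp_one_div_sqrt_two {n : ℕ} (hn : n ≠ 0) : stirlingSeq n ≤ exp 1 / √2 := by
  obtain ⟨k, rfl⟩ := Nat.exists_eq_add_of_le' (Nat.one_le_iff_ne_zero.mpr hn)
  simpa using stirlingSeq'_antitone (Nat.zero_le k)

theorem add_choose_mul_pow_eq_stirlingSeq {a b : ℕ} (ha : a ≠ 0) (hb : b ≠ 0) :
    ((a + b).choose a : ℝ) * (a / (a + b)) ^ a * (b / (a + b)) ^ b =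
      stirlingSeq (a + b) / (stirlingSeq a * stirlingSeq b) * (√((a + b) / (a * b)) / √2) := by
  have ha' : (0 : ℝ) < a := by positivity
  have hb' : (0 : ℝ) < b := by positivity
  have hab : √((a + b) / (a * b)) / √2 = √(2 * (a + b)) / (√(2 * a) * √(2 * b)) := by
    rw [← sqrt_div' _ zero_le_two, ← sqrt_mul' _ (by positivity), ← sqrt_div' _ (by positivity)]
    congr 1
    field_simp
  simp only [stirlingSeq, Nat.cast_add_choose, hab, Nat.cast_add, div_pow, pow_add]
  have : (0 : ℝ) < √(2 * (a + b)) := by positivity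
  field_simp

theorem add_choose_mul_pow_le {a b : ℕ} (ha : a ≠ 0) (hb : b ≠ 0) :
    ((a + b).choose a : ℝ) * (a / (a + b)) ^ a * (b / (a + b)) ^ b ≤
      exp 1 / (2 * π) * √((a + b) / (a * b)) := by
  have hπ : √π * √π = π := mul_self_sqrt pi_pos.le
  have hratio : stirlingSeq (a + b) / (stirlingSeq a * stirlingSeq b) ≤ exp 1 / √2 / π := by
    rw [← hπ]
    exact div_le_div₀ (by positivity) (stirlingSeq_le_exp_one_div_sqrt_two (by omega))
      (by positivity) (mul_le_mul (sqrt_pi_le_stirlingSeq ha) (sqrt_pi_le_stirlingSeq hb)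
        (by positivity) ((sqrt_nonneg π).trans (sqrt_pi_le_stirlingSeq ha)))
  calc _ = _ := add_choose_mul_pow_eq_stirlingSeq ha hb
    _ ≤ exp 1 / √2 / π * (√((a + b) / (a * b)) / √2) := by gcongr
    _ = _ := by field_simp; simp

theorem le_add_choose_mul_pow {a b : ℕ} (ha : a ≠ 0) (hb : b ≠ 0) :
    √(2 * π) / exp 1 ^ 2 * √((a + b) / (a * b)) ≤
      ((a + b).choose a : ℝ) * (a / (a + b)) ^ a * (b / (a + b)) ^ b := by
  have hratio : √π / (exp 1 / √2) ^ 2 ≤ stirlingSeq (a + b) / (stirlingSeq a * stirlingSeq b) := by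
    have hpos {m : ℕ} (hm : m ≠ 0) : 0 < stirlingSeq m :=
      (sqrt_pos.2 pi_pos).trans_le (sqrt_pi_le_stirlingSeq hm)
    rw [sq]
    exact div_le_div₀ (hpos (by omega)).le (sqrt_pi_le_stirlingSeq (by omega))
      (mul_pos (hpos ha) (hpos hb)) (mul_le_mul (stirlingSeq_le_exp_one_div_sqrt_two ha)
        (stirlingSeq_le_exp_one_div_sqrt_two hb) (hpos hb).le (by positivity))
  calc _ = √π / (exp 1 / √2) ^ 2 * (√((a + b) / (a * b)) / √2) := by
        rw [sqrt_mul zero_le_two]; field_simp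
    _ ≤ _ := by gcongr
    _ = _ := (add_choose_mul_pow_eq_stirlingSeq ha hb).symm

theorem eval_bernsteinPolynomial (n i : ℕ) (p : ℝ) :
    (bernsteinPolynomial ℝ n i).eval p = n.choose i * p ^ i * (1 - p) ^ (n - i) := by
  simp [bernsteinPolynomial]

theorem sum_eval_bernsteinPolynomial (n : ℕ) (p : ℝ) :
    ∑ i ∈ range (n + 1), (bernsteinPolynomial ℝ n i).eval p = 1 := by
  simpa [eval_finsetSum] using congr_arg (eval p) (bernsteinPolynomial.sum ℝ n)

theorem succ_mul_one_sub_mul_eval_bernsteinPolynomial_succ (n i : ℕ) (p : ℝ) :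
    (i + 1) * (1 - p) * (bernsteinPolynomial ℝ n (i + 1)).eval p =
      (n - i) * p * (bernsteinPolynomial ℝ n i).eval p := by
  rcases lt_or_ge i n with hin | hni
  · have hchoose : (n.choose (i + 1) : ℝ) * (i + 1) = n.choose i * (n - i) := by
      rw [← Nat.cast_sub hin.le]
      exact_mod_cast Nat.choose_succ_right_eq n i
    have hpow : (1 - p) ^ (n - i) = (1 - p) ^ (n - (i + 1)) * (1 - p) := by
      rw [← pow_succ]; congr 1; omega
    simp only [eval_bernsteinPolynomial, hpow]
    linear_combination (1 - p) * p ^ (i + 1) * (1 - p) ^ (n - (i + 1)) * hchoose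
  · rw [bernsteinPolynomial.eq_zero_of_lt ℝ (by omega : n < i + 1)]
    rcases hni.eq_or_lt with rfl | hlt
    · simp
    · simp [bernsteinPolynomial.eq_zero_of_lt ℝ hlt]

theorem sum_range_mul_eval_bernsteinPolynomial (n m : ℕ) (p : ℝ) :
    ∑ i ∈ range m, (n * p - i) * (bernsteinPolynomial ℝ n i).eval p =
      m * (1 - p) * (bernsteinPolynomial ℝ n m).eval p := by
  induction m with
  | zero => simp
  | succ m ih =>
    rw [sum_range_succ, ih]
    push_cast
    linear_combination -succ_mul_one_sub_mul_eval_bernsteinPolynomial_succ n m p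

theorem sum_min_mul_eval_bernsteinPolynomial {n μ : ℕ} {p : ℝ} (hμn : μ ≤ n)
    (hμ : (μ : ℝ) = n * p) :
    ∑ i ∈ range (n + 1), (min i μ : ℕ) * (bernsteinPolynomial ℝ n i).eval p =
      μ - μ * ((1 - p) * (bernsteinPolynomial ℝ n μ).eval p) := by
  have hdeficit : ∑ i ∈ range (n + 1), (μ - i : ℕ) * (bernsteinPolynomial ℝ n i).eval p =
      ∑ i ∈ range μ, (n * p - i) * (bernsteinPolynomial ℝ n i).eval p := by
    refine (sum_subset (range_subset_range.2 (by omega)) fun i _ hi => ?_).symm.trans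
      (sum_congr rfl fun i hi => ?_)
    · rw [mem_range, not_lt] at hi
      simp [Nat.sub_eq_zero_of_le hi]
    · rw [Nat.cast_sub (mem_range.1 hi).le, hμ]
  calc _ = ∑ i ∈ range (n + 1), (μ * (bernsteinPolynomial ℝ n i).eval p -
        (μ - i : ℕ) * (bernsteinPolynomial ℝ n i).eval p) := by
        refine sum_congr rfl fun i _ => ?_
        rw [show min i μ = μ - (μ - i) by omega, Nat.cast_sub (Nat.sub_le _ _)]
        ring
    _ = _ := by
        rw [sum_sub_distrib, ← mul_sum, sum_eval_bernsteinPolynomial, hdeficit,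
          sum_range_mul_eval_bernsteinPolynomial]
        ring

theorem one_sub_mul_eval_bernsteinPolynomial_mode_bounds {n μ : ℕ} {p : ℝ} (hμ0 : μ ≠ 0)
    (hp1 : p ≤ 1) (hμ : (μ : ℝ) = n * p) :
    √(2 * π) / exp 1 ^ 2 * √(1 - p) / √μ ≤ (1 - p) * (bernsteinPolynomial ℝ n μ).eval p ∧
      (1 - p) * (bernsteinPolynomial ℝ n μ).eval p ≤ exp 1 / (2 * π) * √(1 - p) / √μ := by
  rcases hp1.eq_or_lt with rfl | hp1
  · simp
  have hμpos : (0 : ℝ) < μ := by positivity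
  have hμn : μ < n := by
    have hn : (0 : ℝ) < n := by
      rcases (Nat.cast_nonneg (α := ℝ) n).eq_or_lt with h | h
      · rw [← h, zero_mul] at hμ; exact absurd hμ hμpos.ne'
      · exact h
    exact_mod_cast (hμ.trans_lt (mul_lt_of_lt_one_right hn hp1) :)
  obtain ⟨b, rfl⟩ : ∃ b, n = μ + b := ⟨n - μ, by omega⟩
  have hb : b ≠ 0 := by omega
  have hbpos : (0 : ℝ) < b := by positivity
  push_cast at hμ
  have hp : p = μ / (μ + b) := by field_simp; linarith
  have hq : 1 - p = b / (μ + b) := by rw [hp]; field_simp; ring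
  have hmode : (bernsteinPolynomial ℝ (μ + b) μ).eval p =
      ((μ + b).choose μ : ℝ) * (μ / (μ + b)) ^ μ * (b / (μ + b)) ^ b := by
    rw [eval_bernsteinPolynomial, hq, Nat.add_sub_cancel_left, ← hp]
  have hscale : (1 - p) * √((μ + b) / (μ * b)) = √(1 - p) / √μ := by
    have hq0 : 0 ≤ 1 - p := sub_nonneg.2 hp1.le
    calc _ = √(1 - p) * √((1 - p) * ((μ + b) / (μ * b))) := by
          rw [sqrt_mul hq0, ← mul_assoc, mul_self_sqrt hq0]
      _ = _ := by
          rw [show (1 - p) * ((μ + b) / (μ * b)) = 1 / μ by rw [hq]; field_simp,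
            sqrt_div' _ hμpos.le, Real.sqrt_one, mul_one_div]
  rw [hmode]
  constructor
  · calc _ = (1 - p) * (√(2 * π) / exp 1 ^ 2 * √((μ + b) / (μ * b))) := by
          rw [mul_left_comm, hscale, mul_div_assoc]
      _ ≤ _ := mul_le_mul_of_nonneg_left (le_add_choose_mul_pow hμ0 hb) (sub_nonneg.2 hp1.le)
  · calc _ ≤ (1 - p) * (exp 1 / (2 * π) * √((μ + b) / (μ * b))) :=
          mul_le_mul_of_nonneg_left (add_choose_mul_pow_le hμ0 hb) (sub_nonneg.2 hp1.le)
      _ = _ := by rw [mul_left_comm, hscale, mul_div_assoc]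

theorem expectation_min_binomial_bounds_general (n : ℕ) (p : ℝ)
    (hp1 : p ≤ 1) (μ : ℕ) (hμ : (μ : ℝ) = n * p) :
    (μ : ℝ) * (1 - (Real.exp 1 / (2 * π)) * Real.sqrt (1 - p) / Real.sqrt μ) ≤
      (∑ i ∈ Finset.range (n + 1),
        ((min i μ : ℕ) : ℝ) * (n.choose i : ℝ) * p ^ i * (1 - p) ^ (n - i)) ∧
    (∑ i ∈ Finset.range (n + 1),
        ((min i μ : ℕ) : ℝ) * (n.choose i : ℝ) * p ^ i * (1 - p) ^ (n - i)) ≤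
      (μ : ℝ) * (1 - (Real.sqrt (2 * π) / (Real.exp 1) ^ 2) * Real.sqrt (1 - p) / Real.sqrt μ) := by
  rcases eq_or_ne μ 0 with rfl | hμ0
  · simp
  have hμn : μ ≤ n := by
    exact_mod_cast (hμ.trans_le (mul_le_of_le_one_right (Nat.cast_nonneg n) hp1) :)
  have hsum : ∑ i ∈ range (n + 1),
      ((min i μ : ℕ) : ℝ) * (n.choose i : ℝ) * p ^ i * (1 - p) ^ (n - i) =
        μ - μ * ((1 - p) * (bernsteinPolynomial ℝ n μ).eval p) := by
    rw [← sum_min_mul_eval_bernsteinPolynomial hμn hμ]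
    simp only [eval_bernsteinPolynomial, mul_assoc]
  obtain ⟨hlower, hupper⟩ := one_sub_mul_eval_bernsteinPolynomial_mode_bounds hμ0 hp1 hμ
  rw [hsum, mul_one_sub, mul_one_sub]
  exact ⟨sub_le_sub_left (mul_le_mul_of_nonneg_left hupper μ.cast_nonneg) _,
    sub_le_sub_left (mul_le_mul_of_nonneg_left hlower μ.cast_nonneg) _⟩

theorem expectation_min_binomial_bounds (n : ℕ) (hn : 0 < n) (p : ℝ) (hp0 : 0 < p)
    (hp1 : p ≤ 1) (μ : ℕ) (hμ : (μ : ℝ) = n * p) :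
    (μ : ℝ) * (1 - (Real.exp 1 / (2 * π)) * Real.sqrt (1 - p) / Real.sqrt μ) ≤
      (∑ i ∈ Finset.range (n + 1),
        ((min i μ : ℕ) : ℝ) * (n.choose i : ℝ) * p ^ i * (1 - p) ^ (n - i)) ∧
    (∑ i ∈ Finset.range (n + 1),
        ((min i μ : ℕ) : ℝ) * (n.choose i : ℝ) * p ^ i * (1 - p) ^ (n - i)) ≤
      (μ : ℝ) * (1 - (Real.sqrt (2 * π) / (Real.exp 1) ^ 2) * Real.sqrt (1 - p) / Real.sqrt μ) :=
  expectation_min_binomial_bounds_general n p hp1 μ hμ
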